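/- Let 𝓕 be a finite system of nonempty subsets of [n] and G = KG(𝓕) its Kneser graph, assumed to have no isolated vertices. (a) The map sending each vertex B′ ⊎ B″ of B₁'(𝓕) to {F ∈ 𝓕 : F ⊆ B′} ⊎ {F ∈ 𝓕 : F ⊆ B″} is a simplicial ℤ₂-map B₁'(𝓕) → B₁(G). (b) The map sending each vertex A′ ⊎ A″ of B₁(G) to (⋃A′) ⊎ (⋃A″) is a simplicial ℤ₂-map B₁(G) → B₁'(𝓕). -/

import Mathlib

open Finset

attribute [local instance] Classical.propDecidable

noncomputable section

variable {V : Type*}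

/-- The set `CN(A)` of common neighbors of `A` in `G` (so `CN(∅) = V`). -/
def CN [Fintype V] (G : SimpleGraph V) (A : Finset V) : Finset V :=
  Finset.univ.filter fun v => ∀ a ∈ A, G.Adj a v

/-- The shore of `S ⊆ V × {1,2}` lying over `b` (with `false` for the first copy of `V`
and `true` for the second). -/
def shore (S : Finset (V × Bool)) (b : Bool) : Finset V :=
  (S.filter fun p => p.2 = b).image Prod.fst

/-- `A' ⊎ A'' := (A' × {1}) ∪ (A'' × {2})`, with `false` for `1` and `true` for `2`. -/
def joinPair (A' A'' : Finset V) : Finset (V × Bool) :=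
  A'.image (fun v => (v, false)) ∪ A''.image (fun v => (v, true))

/-- The ℤ₂-action on subsets of `V × {1,2}`: interchange the two copies of `V`,
i.e. `A' ⊎ A'' ↦ A'' ⊎ A'`. -/
def swapFinset (S : Finset (V × Bool)) : Finset (V × Bool) :=
  S.image fun p => (p.1, !p.2)

/-- `G[A', A'']` is complete: every vertex of `A'` is adjacent to every vertex of `A''`. -/
def IsCompleteBip (G : SimpleGraph V) (A' A'' : Finset V) : Prop :=
  ∀ a ∈ A', ∀ b ∈ A'', G.Adj a b

/-- Simplices of the box complex `B(G)`: sets `A' ⊎ A''` with `A'`, `A''` disjoint,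
`G[A', A'']` complete and `CN(A') ≠ ∅ ≠ CN(A'')`. -/
def BoxSimplex [Fintype V] (G : SimpleGraph V) (S : Finset (V × Bool)) : Prop :=
  Disjoint (shore S false) (shore S true) ∧
  IsCompleteBip G (shore S false) (shore S true) ∧
  (CN G (shore S false)).Nonempty ∧ (CN G (shore S true)).Nonempty

/-- Simplices of the box complex `B₀(G)`: sets `A' ⊎ A''` with `A'`, `A''` disjoint and
`G[A', A'']` complete. -/
def Box0Simplex (G : SimpleGraph V) (S : Finset (V × Bool)) : Prop :=
  Disjoint (shore S false) (shore S true) ∧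
  IsCompleteBip G (shore S false) (shore S true)

/-- Vertices of `B₁(G)`: sets `A' ⊎ A''` with `A'`, `A''` nonempty, disjoint and
`G[A', A'']` complete. -/
def B1Vertex (G : SimpleGraph V) (S : Finset (V × Bool)) : Prop :=
  (shore S false).Nonempty ∧ (shore S true).Nonempty ∧
  Disjoint (shore S false) (shore S true) ∧
  IsCompleteBip G (shore S false) (shore S true)

/-- Simplices of the order complex `B₁(G)`: chains of vertices of `B₁(G)` under inclusion. -/
def B1Simplex (G : SimpleGraph V) (C : Finset (Finset (V × Bool))) : Prop :=
  (∀ T ∈ C, B1Vertex G T) ∧ IsChain (· ⊆ ·) (C : Set (Finset (V × Bool)))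

/-- Simplices of the barycentric subdivision `sd K` of the complex `K` whose simplices are
given by the predicate `P`: chains of nonempty simplices of `K` under inclusion. -/
def sdSimplex {γ : Type*} (P : Finset γ → Prop) (C : Finset (Finset γ)) : Prop :=
  (∀ S ∈ C, P S ∧ S.Nonempty) ∧ IsChain (· ⊆ ·) (C : Set (Finset γ))

/-- The Kneser graph of a set system `𝓕`: the vertices are the members of `𝓕`,
and two (distinct) members are adjacent if and only if they are disjoint. -/
def KG {α : Type*} (𝓕 : Finset (Finset α)) : SimpleGraph {F // F ∈ 𝓕} where
  Adj A B := A ≠ B ∧ Disjoint A.1 B.1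
  symm := ⟨fun A B h => ⟨h.1.symm, h.2.symm⟩⟩
  loopless := ⟨fun A h => h.1 rfl⟩

/-- Vertices of `B₁'(𝓕)`: sets `B' ⊎ B''` with `B', B'' ⊆ [n]` disjoint such that
both `B'` and `B''` contain a member of `𝓕`. -/
def B1'Vertex (n : ℕ) (𝓕 : Finset (Finset ℕ)) (T : Finset (ℕ × Bool)) : Prop :=
  shore T false ⊆ Finset.Icc 1 n ∧ shore T true ⊆ Finset.Icc 1 n ∧
  Disjoint (shore T false) (shore T true) ∧
  (∃ F ∈ 𝓕, F ⊆ shore T false) ∧ (∃ F ∈ 𝓕, F ⊆ shore T true)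

/-- Simplices of the order complex `B₁'(𝓕)`: chains of its vertices under inclusion. -/
def B1'Simplex (n : ℕ) (𝓕 : Finset (Finset ℕ)) (C : Finset (Finset (ℕ × Bool))) : Prop :=
  (∀ T ∈ C, B1'Vertex n 𝓕 T) ∧ IsChain (· ⊆ ·) (C : Set (Finset (ℕ × Bool)))

/-- The map `B' ⊎ B'' ↦ {F ∈ 𝓕 : F ⊆ B'} ⊎ {F ∈ 𝓕 : F ⊆ B''}`. -/
def toKneserSide (𝓕 : Finset (Finset ℕ)) (T : Finset (ℕ × Bool)) :
    Finset ({F // F ∈ 𝓕} × Bool) :=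
  joinPair (Finset.univ.filter fun F : {F // F ∈ 𝓕} => F.1 ⊆ shore T false)
           (Finset.univ.filter fun F : {F // F ∈ 𝓕} => F.1 ⊆ shore T true)

/-- The map `A' ⊎ A'' ↦ (⋃ A') ⊎ (⋃ A'')`. -/
def toGroundSide (𝓕 : Finset (Finset ℕ)) (T : Finset ({F // F ∈ 𝓕} × Bool)) :
    Finset (ℕ × Bool) :=
  joinPair ((shore T false).sup fun F => F.1) ((shore T true).sup fun F => F.1)

/-! Both maps are monotone, so they carry chains to chains, and both are built shore by shore,
so they commute with swapping the shores. It remains to see that vertices go to vertices.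
A member of `𝓕` cannot lie in both of two disjoint sets `B'`, `B''` since it is nonempty, so the
families of members inside `B'` and inside `B''` are disjoint and, being pairwise disjoint
across, span a complete bipartite subgraph of `KG 𝓕`. Conversely, if `KG 𝓕[A', A'']` is
complete then `⋃ A'` and `⋃ A''` are disjoint subsets of `[n]`, each containing a member of `𝓕`. -/

section Shores

lemma mem_shore {S : Finset (V × Bool)} {b : Bool} {v : V} :
    v ∈ shore S b ↔ (v, b) ∈ S := by
  simp [shore]

lemma shore_mono {S T : Finset (V × Bool)} (h : S ⊆ T) (b : Bool) :
    shore S b ⊆ shore T b :=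
  fun _ hv => mem_shore.2 (h (mem_shore.1 hv))

lemma ext_shore {S T : Finset (V × Bool)} (h : ∀ b, shore S b = shore T b) : S = T := by
  ext ⟨v, b⟩
  rw [← mem_shore, ← mem_shore, h]

@[simp]
lemma shore_swapFinset (S : Finset (V × Bool)) (b : Bool) :
    shore (swapFinset S) b = shore S (!b) := by
  ext v
  simp [mem_shore, swapFinset]

@[simp]
lemma shore_joinPair (A' A'' : Finset V) (b : Bool) :
    shore (joinPair A' A'') b = bif b then A'' else A' := by
  ext v
  cases b <;> simp [mem_shore, joinPair]

lemma joinPair_mono {A' A'' B' B'' : Finset V} (h' : A' ⊆ B') (h'' : A'' ⊆ B'') :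
    joinPair A' A'' ⊆ joinPair B' B'' :=
  union_subset_union (image_subset_image h') (image_subset_image h'')

end Shores

lemma IsChain.finset_image_of_monotone {α β : Type*} [DecidableEq β] {f : Finset α → Finset β}
    (hf : Monotone f) {C : Finset (Finset α)} (hC : IsChain (· ⊆ ·) (C : Set (Finset α))) :
    IsChain (· ⊆ ·) ((C.image f : Finset (Finset β)) : Set (Finset β)) := by
  rw [coe_image]
  exact hC.image_of_map_rel _ _ _ fun _ _ h => hf h

section KneserSide

variable {𝓕 : Finset (Finset ℕ)}

@[simp]
lemma shore_toKneserSide (T : Finset (ℕ × Bool)) (b : Bool) :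
    shore (toKneserSide 𝓕 T) b = univ.filter fun F : {F // F ∈ 𝓕} => F.1 ⊆ shore T b := by
  cases b <;> simp [toKneserSide]

lemma toKneserSide_mono : Monotone (toKneserSide 𝓕) := fun _ _ h =>
  joinPair_mono (monotone_filter_right _ fun _ _ hF => hF.trans (shore_mono h _))
    (monotone_filter_right _ fun _ _ hF => hF.trans (shore_mono h _))

lemma toKneserSide_swapFinset (T : Finset (ℕ × Bool)) :
    toKneserSide 𝓕 (swapFinset T) = swapFinset (toKneserSide 𝓕 T) :=
  ext_shore fun b => by simp

lemma B1'Vertex.toKneserSide {n : ℕ} {T : Finset (ℕ × Bool)} (hT : B1'Vertex n 𝓕 T)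
    (hne : ∀ F ∈ 𝓕, F.Nonempty) : B1Vertex (KG 𝓕) (toKneserSide 𝓕 T) := by
  obtain ⟨-, -, hdisj, ⟨F', hF'𝓕, hF'⟩, ⟨F'', hF''𝓕, hF''⟩⟩ := hT
  have not_both : ∀ F : {F // F ∈ 𝓕}, F.1 ⊆ shore T false → ¬ F.1 ⊆ shore T true :=
    fun F h' h'' => (hne F.1 F.2).ne_empty ((hdisj.mono_left h').eq_bot_of_le h'')
  refine ⟨⟨⟨F', hF'𝓕⟩, by simpa using hF'⟩, ⟨⟨F'', hF''𝓕⟩, by simpa using hF''⟩, ?_, ?_⟩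
  · simp only [shore_toKneserSide, disjoint_left, mem_filter, mem_univ, true_and]
    exact not_both
  · intro F hF G hG
    simp only [shore_toKneserSide, mem_filter, mem_univ, true_and] at hF hG
    exact ⟨fun hFG => not_both F hF (hFG ▸ hG), hdisj.mono hF hG⟩

lemma B1'Simplex.image_toKneserSide {n : ℕ} {C : Finset (Finset (ℕ × Bool))}
    (hC : B1'Simplex n 𝓕 C) (hne : ∀ F ∈ 𝓕, F.Nonempty) :
    B1Simplex (KG 𝓕) (C.image (toKneserSide 𝓕)) := by
  refine ⟨fun T hT => ?_, hC.2.finset_image_of_monotone toKneserSide_mono⟩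
  obtain ⟨S, hS, rfl⟩ := mem_image.1 hT
  exact (hC.1 S hS).toKneserSide hne

end KneserSide

section GroundSide

variable {𝓕 : Finset (Finset ℕ)}

@[simp]
lemma shore_toGroundSide (T : Finset ({F // F ∈ 𝓕} × Bool)) (b : Bool) :
    shore (toGroundSide 𝓕 T) b = (shore T b).sup Subtype.val := by
  cases b <;> simp [toGroundSide]

lemma toGroundSide_mono : Monotone (toGroundSide 𝓕) := fun _ _ h =>
  joinPair_mono (sup_mono (shore_mono h _)) (sup_mono (shore_mono h _))

lemma toGroundSide_swapFinset (T : Finset ({F // F ∈ 𝓕} × Bool)) :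
    toGroundSide 𝓕 (swapFinset T) = swapFinset (toGroundSide 𝓕 T) :=
  ext_shore fun b => by simp

lemma B1Vertex.toGroundSide {n : ℕ} {T : Finset ({F // F ∈ 𝓕} × Bool)}
    (hT : B1Vertex (KG 𝓕) T) (hsub : ∀ F ∈ 𝓕, F ⊆ Icc 1 n) :
    B1'Vertex n 𝓕 (toGroundSide 𝓕 T) := by
  obtain ⟨⟨F', hF'⟩, ⟨F'', hF''⟩, -, hcomplete⟩ := hT
  simp only [B1'Vertex, shore_toGroundSide]
  refine ⟨Finset.sup_le fun F _ => hsub F.1 F.2, Finset.sup_le fun F _ => hsub F.1 F.2, ?_,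
    ⟨F'.1, F'.2, le_sup (f := Subtype.val) hF'⟩, ⟨F''.1, F''.2, le_sup (f := Subtype.val) hF''⟩⟩
  exact Finset.disjoint_sup_left.2 fun F hF => Finset.disjoint_sup_right.2 fun G hG =>
    (hcomplete F hF G hG).2

lemma B1Simplex.image_toGroundSide {n : ℕ} {C : Finset (Finset ({F // F ∈ 𝓕} × Bool))}
    (hC : B1Simplex (KG 𝓕) C) (hsub : ∀ F ∈ 𝓕, F ⊆ Icc 1 n) :
    B1'Simplex n 𝓕 (C.image (toGroundSide 𝓕)) := by
  refine ⟨fun T hT => ?_, hC.2.finset_image_of_monotone toGroundSide_mono⟩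
  obtain ⟨S, hS, rfl⟩ := mem_image.1 hT
  exact (hC.1 S hS).toGroundSide hsub

end GroundSide

theorem B1'_iso_B1_kneser_general (n : ℕ) (𝓕 : Finset (Finset ℕ))
    (h𝓕 : ∀ F ∈ 𝓕, F ⊆ Finset.Icc 1 n ∧ F.Nonempty) :
    -- (a)
    ((∀ C : Finset (Finset (ℕ × Bool)), B1'Simplex n 𝓕 C →
        B1Simplex (KG 𝓕) (C.image (toKneserSide 𝓕))) ∧
      (∀ T : Finset (ℕ × Bool), B1'Vertex n 𝓕 T →
        toKneserSide 𝓕 (swapFinset T) = swapFinset (toKneserSide 𝓕 T))) ∧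
    -- (b)
    ((∀ C : Finset (Finset ({F // F ∈ 𝓕} × Bool)), B1Simplex (KG 𝓕) C →
        B1'Simplex n 𝓕 (C.image (toGroundSide 𝓕))) ∧
      (∀ T : Finset ({F // F ∈ 𝓕} × Bool), B1Vertex (KG 𝓕) T →
        toGroundSide 𝓕 (swapFinset T) = swapFinset (toGroundSide 𝓕 T))) := by
  obtain ⟨hsub, hne⟩ := forall₂_and.1 h𝓕
  exact ⟨⟨fun C hC => hC.image_toKneserSide hne, fun T _ => toKneserSide_swapFinset T⟩,
    ⟨fun C hC => hC.image_toGroundSide hsub, fun T _ => toGroundSide_swapFinset T⟩⟩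

/-- For `G = KG(𝓕)`: (a) `B' ⊎ B'' ↦ {F ∈ 𝓕 : F ⊆ B'} ⊎ {F ∈ 𝓕 : F ⊆ B''}` is a
simplicial ℤ₂-map `B₁'(𝓕) → B₁(G)`; (b) `A' ⊎ A'' ↦ (⋃A') ⊎ (⋃A'')` is a simplicial
ℤ₂-map `B₁(G) → B₁'(𝓕)`. -/
theorem B1'_iso_B1_kneser (n : ℕ) (𝓕 : Finset (Finset ℕ))
    (h𝓕 : ∀ F ∈ 𝓕, F ⊆ Finset.Icc 1 n ∧ F.Nonempty)
    (hiso : ∀ v : {F // F ∈ 𝓕}, ∃ u, (KG 𝓕).Adj v u) :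
    -- (a)
    ((∀ C : Finset (Finset (ℕ × Bool)), B1'Simplex n 𝓕 C →
        B1Simplex (KG 𝓕) (C.image (toKneserSide 𝓕))) ∧
      (∀ T : Finset (ℕ × Bool), B1'Vertex n 𝓕 T →
        toKneserSide 𝓕 (swapFinset T) = swapFinset (toKneserSide 𝓕 T))) ∧
    -- (b)
    ((∀ C : Finset (Finset ({F // F ∈ 𝓕} × Bool)), B1Simplex (KG 𝓕) C →
        B1'Simplex n 𝓕 (C.image (toGroundSide 𝓕))) ∧
      (∀ T : Finset ({F // F ∈ 𝓕} × Bool), B1Vertex (KG 𝓕) T →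
        toGroundSide 𝓕 (swapFinset T) = swapFinset (toGroundSide 𝓕 T))) :=
  B1'_iso_B1_kneser_general n 𝓕 h𝓕
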